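/- Let T > 0, let π = (π_n) be a sequence of partitions of [0,T] with mesh tending to 0, let p > 2, and let x : [0,T] → ℝ be continuous with finite p-th variation along π. Write φ(t) = [x]^(p)_π(t) and assume φ is continuously differentiable with 0 < c ≤ φ′ ≤ C < ∞ on [0,T]. For q > 0 set S^{(q)}_n(t) = Σ_{t^n_{i+1} ≤ t} (φ(t^n_{i+1}) − φ(t^n_i))^{(q−2)/q} (x(t^n_{i+1}) − x(t^n_i))². If for some t ∈ [0,T] one has liminf_{n→∞} S^{(p)}_n(t) > 0, then for every q with 0 < q < p one has liminf_{n→∞} S^{(q)}_n(t) = +∞. -/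

import Mathlib

/-!
Write `(q - 2) / q = (p - 2) / p - δ` with `δ = 2 / q - 2 / p > 0`. Since `φ` is uniformly
continuous on `[0, T]` and the mesh tends to `0`, every increment `Δφ` along `π_n` is eventually
at most any given `η > 0`, so each summand of `S^{(q)}_n(t)` is at least `η ^ (-δ)` times the
corresponding summand of `S^{(p)}_n(t)`. As `S^{(p)}_n(t)` stays above a positive constant and
`η ^ (-δ) → ∞` as `η → 0`, `S^{(q)}_n(t) → ∞`.
-/

open Filter Topology Set

lemma monotoneOn_Iic_of_le_succ {α : Type*} [Preorder α] {f : ℕ → α} {N : ℕ}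
    (h : ∀ i < N, f i ≤ f (i + 1)) : MonotoneOn f (Iic N) :=
  monotoneOn_of_le_succ ordConnected_Iic fun i _ _ hi => h i hi

lemma mem_Icc_of_le_succ {α : Type*} [Preorder α] {f : ℕ → α} {N : ℕ}
    (h : ∀ i < N, f i ≤ f (i + 1)) {i : ℕ} (hi : i ≤ N) : f i ∈ Icc (f 0) (f N) :=
  have hf := monotoneOn_Iic_of_le_succ h
  ⟨hf (Nat.zero_le _) hi (Nat.zero_le i), hf hi (mem_Iic.2 le_rfl) hi⟩

lemma Real.rpow_sub_mul_rpow_le {d η r s : ℝ} (hd : 0 ≤ d) (hdη : d ≤ η) (hsr : s ≤ r)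
    (hr : r ≠ 0) : η ^ (s - r) * d ^ r ≤ d ^ s := by
  rcases hd.eq_or_lt with rfl | hd
  · rw [Real.zero_rpow hr, mul_zero]
    exact Real.rpow_nonneg le_rfl s
  · calc η ^ (s - r) * d ^ r ≤ d ^ (s - r) * d ^ r :=
          mul_le_mul_of_nonneg_right (Real.rpow_le_rpow_of_nonpos hd hdη (sub_nonpos.2 hsr))
            (Real.rpow_nonneg hd.le r)
      _ = d ^ s := by rw [← Real.rpow_add hd, sub_add_cancel]

lemma eventually_forall_abs_sub_lt_of_mesh {a b : ℝ} {f : ℝ → ℝ} (hf : ContinuousOn f (Icc a b))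
    {π : ℕ → ℕ → ℝ} {N : ℕ → ℕ} (hmem : ∀ n, ∀ i ≤ N n, π n i ∈ Icc a b)
    (hmono : ∀ n, ∀ i < N n, π n i ≤ π n (i + 1))
    (hmesh : ∀ ε : ℝ, 0 < ε → ∀ᶠ n in atTop, ∀ i < N n, π n (i + 1) - π n i < ε)
    {η : ℝ} (hη : 0 < η) :
    ∀ᶠ n in atTop, ∀ i < N n, |f (π n (i + 1)) - f (π n i)| < η := by
  obtain ⟨ε, hε, hf⟩ := Metric.uniformContinuousOn_iff.1
    (isCompact_Icc.uniformContinuousOn_of_continuous hf) η hη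
  filter_upwards [hmesh ε hε] with n hn i hi
  have hdist : dist (π n (i + 1)) (π n i) < ε := by
    rw [Real.dist_eq, abs_of_nonneg (sub_nonneg.2 (hmono n i hi))]
    exact hn i hi
  simpa [Real.dist_eq] using hf _ (hmem n (i + 1) hi) _ (hmem n i hi.le) hdist

lemma tendsto_atTop_of_rpow_mul_le {ι : Type*} {l : Filter ι} {u v : ι → ℝ} {e a : ℝ}
    (he : e < 0) (ha : 0 < a) (hv : ∀ᶠ i in l, a < v i)
    (huv : ∀ η > 0, ∀ᶠ i in l, η ^ e * v i ≤ u i) : Tendsto u l atTop := by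
  refine tendsto_atTop.2 fun B => ?_
  obtain ⟨η, hηB, hη⟩ := (((tendsto_rpow_neg_nhdsGT_zero he).eventually_ge_atTop (B / a)).and
    self_mem_nhdsWithin).exists
  filter_upwards [hv, huv η hη] with i hvi hi
  calc B = B / a * a := by field_simp
    _ ≤ η ^ e * v i := by gcongr
    _ ≤ u i := hi

/-- `scaledQuadSum π N φ x ((q - 2) / q) t n` is the sum `S^{(q)}_n(t)`. -/
noncomputable def scaledQuadSum (π : ℕ → ℕ → ℝ) (N : ℕ → ℕ) (φ x : ℝ → ℝ) (r t : ℝ) (n : ℕ) : ℝ :=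
  ∑ i ∈ Finset.range (N n),
    if π n (i + 1) ≤ t then (φ (π n (i + 1)) - φ (π n i)) ^ r * (x (π n (i + 1)) - x (π n i)) ^ 2
    else 0

lemma rpow_sub_mul_scaledQuadSum_le {π : ℕ → ℕ → ℝ} {N : ℕ → ℕ} {φ x : ℝ → ℝ} {r s t η : ℝ}
    {n : ℕ} (hinc : ∀ i < N n, 0 ≤ φ (π n (i + 1)) - φ (π n i) ∧ φ (π n (i + 1)) - φ (π n i) ≤ η)
    (hsr : s ≤ r) (hr : r ≠ 0) :
    η ^ (s - r) * scaledQuadSum π N φ x r t n ≤ scaledQuadSum π N φ x s t n := by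
  rw [scaledQuadSum, Finset.mul_sum]
  refine Finset.sum_le_sum fun i hi => ?_
  obtain ⟨hd, hdη⟩ := hinc i (Finset.mem_range.1 hi)
  split_ifs
  · rw [← mul_assoc]
    exact mul_le_mul_of_nonneg_right (Real.rpow_sub_mul_rpow_le hd hdη hsr hr) (sq_nonneg _)
  · rw [mul_zero]

theorem scaled_qv_switch_liminf_top_of_liminf_pos
    (T : ℝ)
    (π : ℕ → ℕ → ℝ) (N : ℕ → ℕ)
    (hπ0 : ∀ n, π n 0 = 0)
    (hπT : ∀ n, π n (N n) = T)
    (hπmono : ∀ n, ∀ i < N n, π n i < π n (i + 1))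
    (hmesh : ∀ ε : ℝ, 0 < ε → ∀ᶠ n in atTop, ∀ i < N n, π n (i + 1) - π n i < ε)
    (p : ℝ) (hp : 2 < p)
    (x : ℝ → ℝ)
    (φ : ℝ → ℝ)
    (hφcont : ContinuousOn φ (Set.Icc 0 T))
    (hφmono : MonotoneOn φ (Set.Icc 0 T))
    (t : ℝ)
    (hinf : (0 : EReal) < Filter.liminf (fun n => (((fun n => ∑ i ∈ Finset.range (N n),
        if π n (i + 1) ≤ t then
          (φ (π n (i + 1)) - φ (π n i)) ^ ((p - 2) / p)
            * (x (π n (i + 1)) - x (π n i)) ^ 2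
        else 0) n : ℝ) : EReal)) atTop) :
    ∀ q : ℝ, 0 < q → q < p →
      Filter.liminf (fun n => (((fun n => ∑ i ∈ Finset.range (N n),
        if π n (i + 1) ≤ t then
          (φ (π n (i + 1)) - φ (π n i)) ^ ((q - 2) / q)
            * (x (π n (i + 1)) - x (π n i)) ^ 2
        else 0) n : ℝ) : EReal)) atTop = ⊤ := by
  intro q hq hqp
  have hmem : ∀ n, ∀ i ≤ N n, π n i ∈ Icc 0 T := fun n i hi => by
    simpa only [hπ0 n, hπT n] using mem_Icc_of_le_succ (fun i hi => (hπmono n i hi).le) hi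
  have hexp : (q - 2) / q < (p - 2) / p := by
    rw [div_lt_div_iff₀ hq (hq.trans hqp)]
    nlinarith
  have hinc : ∀ η > 0, ∀ᶠ n in atTop, ∀ i < N n,
      0 ≤ φ (π n (i + 1)) - φ (π n i) ∧ φ (π n (i + 1)) - φ (π n i) ≤ η := fun η hη =>
    (eventually_forall_abs_sub_lt_of_mesh hφcont hmem (fun n i hi => (hπmono n i hi).le) hmesh
      hη).mono fun n hn i hi => by
        have hd := sub_nonneg.2 (hφmono (hmem n i hi.le) (hmem n (i + 1) hi) (hπmono n i hi).le)
        exact ⟨hd, (le_abs_self _).trans (hn i hi).le⟩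
  obtain ⟨a, ha, hlt⟩ := EReal.lt_iff_exists_real_btwn.1 hinf
  have hS := tendsto_atTop_of_rpow_mul_le (sub_neg.2 hexp) (EReal.coe_pos.1 ha)
    ((eventually_lt_of_lt_liminf hlt).mono fun n => EReal.coe_lt_coe_iff.1)
    fun η hη => (hinc η hη).mono fun n hn =>
      rpow_sub_mul_scaledQuadSum_le (t := t) (x := x) hn hexp.le
        (div_pos (by linarith) (by linarith)).ne'
  exact (EReal.tendsto_coe_nhds_top_iff.2 hS).liminf_eq
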